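/- arXiv:1805.07180 — 2 statements merged into one kernel-verified Lean document; each statement's English description precedes it below -/
import Mathlib

section
/- Let u be a full Decision-DNNF vertex over X whose arcs carry the exact marginal probabilities, i.e., for every decision vertex v reachable from u, p_b(v) = Z(ch_b(v)) / (Z(ch₀(v)) + Z(ch₁(v))) whenever the denominator is nonzero. Then for every assignment ω over X that is a model of the formula represented by u, Pr_u(ω) = 1/Z(u), and Pr_u(ω) = 0 for non-models; in particular Pr_u is the uniform distribution on the models of u. -/
/-- Full Decision-DNNF formulas (binary decomposition vertices); decision vertices
carry the probabilities p₀, p₁ on their outgoing arcs. -/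
inductive DDNNF (V : Type) where
  | bot : DDNNF V
  | top : DDNNF V
  | dec (x : V) (p₀ p₁ : ℝ) (c₀ c₁ : DDNNF V) : DDNNF V
  | conj (a b : DDNNF V) : DDNNF V

namespace DDNNF

variable {V : Type} [DecidableEq V]

/-- Variables occurring in a Decision-DNNF. -/
def vars : DDNNF V → Finset V
  | bot => ∅
  | top => ∅
  | dec x _ _ c₀ c₁ => insert x (c₀.vars ∪ c₁.vars)
  | conj a b => a.vars ∪ b.vars

/-- The Boolean function represented. -/
def eval : DDNNF V → (V → Bool) → Bool
  | bot, _ => false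
  | top, _ => true
  | dec x _ _ c₀ c₁, ω => if ω x then c₁.eval ω else c₀.eval ω
  | conj a b, ω => a.eval ω && b.eval ω

/-- Structural well-formedness: decision variables do not reappear below, the
children of decomposition vertices share no variables, and the arc probabilities
are nonnegative, sum to 1 and vanish exactly on ⊥-children. -/
def wf : DDNNF V → Prop
  | bot => True
  | top => True
  | dec x p₀ p₁ c₀ c₁ =>
      0 ≤ p₀ ∧ 0 ≤ p₁ ∧ p₀ + p₁ = 1 ∧ (p₀ = 0 ↔ c₀ = bot) ∧ (p₁ = 0 ↔ c₁ = bot) ∧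
      x ∉ c₀.vars ∧ x ∉ c₁.vars ∧ c₀.wf ∧ c₁.wf
  | conj a b => Disjoint a.vars b.vars ∧ a.wf ∧ b.wf

/-- The joint distribution represented by a Decision-DNNF vertex over the
variable set `V` of cardinality `m`. -/
noncomputable def pr (m : ℕ) : DDNNF V → (V → Bool) → ℝ
  | bot, _ => 0
  | top, _ => ((2 : ℝ) ^ m)⁻¹
  | dec x p₀ p₁ c₀ c₁, ω => if ω x then 2 * p₁ * c₁.pr m ω else 2 * p₀ * c₀.pr m ω
  | conj a b, ω => (2 : ℝ) ^ m * a.pr m ω * b.pr m ω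

end DDNNF

namespace DDNNF

variable {V : Type} [DecidableEq V]

/-- The (real-valued) model count over `m` variables computed by the
Decision-DNNF counting recursion: Z(⊥)=0, Z(⊤)=2^m,
Z(decision) = (Z₀+Z₁)/2, Z(∧) = 2^{-m}·Z(a)·Z(b). -/
noncomputable def Zr (m : ℕ) : DDNNF V → ℝ
  | bot => 0
  | top => (2 : ℝ) ^ m
  | dec _ _ _ c₀ c₁ => (c₀.Zr m + c₁.Zr m) / 2
  | conj a b => ((2 : ℝ) ^ m)⁻¹ * a.Zr m * b.Zr m

/-- The arcs carry the exact marginal probabilities: for every decision vertex,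
p_b = Z(ch_b) / (Z(ch₀) + Z(ch₁)) whenever the denominator is nonzero. -/
def exactMarginals (m : ℕ) : DDNNF V → Prop
  | bot => True
  | top => True
  | dec _ p₀ p₁ c₀ c₁ =>
      (c₀.Zr m + c₁.Zr m ≠ 0 →
        p₀ = c₀.Zr m / (c₀.Zr m + c₁.Zr m) ∧ p₁ = c₁.Zr m / (c₀.Zr m + c₁.Zr m)) ∧
      c₀.exactMarginals m ∧ c₁.exactMarginals m
  | conj a b => a.exactMarginals m ∧ b.exactMarginals m

end DDNNF

/-! Off the models both sides vanish, because a false child contributes a zero factor to `pr`.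
On a model `ω`, follow the branch that `ω` selects: at a decision vertex the exact marginal
`p_b = Z_b / (Z₀ + Z₁)` cancels the child's `Z_b⁻¹` and leaves `2 / (Z₀ + Z₁) = Z⁻¹`, and at a
decomposition vertex the factor `2 ^ m` of `pr` is the inverse of the `2⁻ᵐ` in `Z`. -/

namespace DDNNF

variable {V : Type}

theorem Zr_nonneg (m : ℕ) (u : DDNNF V) : 0 ≤ u.Zr m := by
  induction u with
  | bot => exact le_rfl
  | top => exact pow_nonneg zero_le_two m
  | dec _ _ _ c₀ c₁ ih₀ ih₁ => simp only [Zr]; positivity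
  | conj a b iha ihb => simp only [Zr]; positivity

theorem Zr_pos_of_eval_eq_true (m : ℕ) {u : DDNNF V} {ω : V → Bool}
    (h : u.eval ω = true) : 0 < u.Zr m := by
  induction u with
  | bot => simp [eval] at h
  | top => exact pow_pos two_pos m
  | dec _ _ _ c₀ c₁ ih₀ ih₁ =>
      simp only [eval] at h
      have := c₀.Zr_nonneg m
      have := c₁.Zr_nonneg m
      simp only [Zr]
      split_ifs at h
      · linarith [ih₁ h]
      · linarith [ih₀ h]
  | conj a b iha ihb =>
      simp only [eval, Bool.and_eq_true] at h
      simp only [Zr]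
      have := iha h.1
      have := ihb h.2
      positivity

theorem pr_eq_zero_of_eval_eq_false (m : ℕ) {u : DDNNF V} {ω : V → Bool}
    (h : u.eval ω = false) : u.pr m ω = 0 := by
  induction u with
  | bot => rfl
  | top => simp [eval] at h
  | dec _ _ _ c₀ c₁ ih₀ ih₁ =>
      simp only [eval] at h
      simp only [pr]
      split_ifs at h ⊢
      · rw [ih₁ h, mul_zero]
      · rw [ih₀ h, mul_zero]
  | conj a b iha ihb =>
      simp only [eval, Bool.and_eq_false_iff] at h
      simp only [pr]
      rcases h with ha | hb
      · rw [iha ha, mul_zero, zero_mul]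
      · rw [ihb hb, mul_zero]

theorem pr_eq_inv_Zr_of_eval_eq_true {m : ℕ} {u : DDNNF V} (hexact : u.exactMarginals m)
    {ω : V → Bool} (h : u.eval ω = true) : u.pr m ω = (u.Zr m)⁻¹ := by
  induction u with
  | bot => simp [eval] at h
  | top => rfl
  | dec _ _ _ c₀ c₁ ih₀ ih₁ =>
      obtain ⟨hp, hex₀, hex₁⟩ := hexact
      simp only [eval] at h
      have h₀ := c₀.Zr_nonneg m
      have h₁ := c₁.Zr_nonneg m
      simp only [pr, Zr]
      split_ifs at h ⊢
      · have hZ₁ := Zr_pos_of_eval_eq_true m h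
        rw [ih₁ hex₁ h, (hp (by linarith)).2]
        field_simp
      · have hZ₀ := Zr_pos_of_eval_eq_true m h
        rw [ih₀ hex₀ h, (hp (by linarith)).1]
        field_simp
  | conj a b iha ihb =>
      obtain ⟨hexa, hexb⟩ := hexact
      simp only [eval, Bool.and_eq_true] at h
      simp only [pr, Zr, iha hexa h.1, ihb hexb h.2, mul_inv, inv_inv, mul_assoc]

end DDNNF

theorem stmt5_general {V : Type} [Fintype V]
    (u : DDNNF V)
    (hexact : u.exactMarginals (Fintype.card V)) :
    ∀ ω : V → Bool,
      u.pr (Fintype.card V) ω =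
        if u.eval ω = true then (u.Zr (Fintype.card V))⁻¹ else 0 := by
  intro ω
  split_ifs with h
  · exact u.pr_eq_inv_Zr_of_eval_eq_true hexact h
  · exact u.pr_eq_zero_of_eval_eq_false _ (Bool.eq_false_iff.mpr h)

/-- if a well-formed satisfiable full Decision-DNNF vertex `u` carries
the exact marginal probabilities on its arcs, then Pr_u is uniform on the models
of `u`: Pr_u(ω) = 1/Z(u) on models and Pr_u(ω) = 0 on non-models. -/
theorem stmt5 {V : Type} [Fintype V] [DecidableEq V]
    (u : DDNNF V) (hwf : u.wf)
    (hexact : u.exactMarginals (Fintype.card V))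
    (hsat : ∃ ω, u.eval ω = true) :
    ∀ ω : V → Bool,
      u.pr (Fintype.card V) ω =
        if u.eval ω = true then (u.Zr (Fintype.card V))⁻¹ else 0 :=
  stmt5_general u hexact
end

section
/- Multi-sample unbiasedness for a decision vertex: let b₁,…,b_N be i.i.d. samples from a Bernoulli distribution Q with Q(b)=p_b>0, let f_b = #{i : bᵢ = b}, and let Ẑ₀, Ẑ₁ be random variables, independent of the samples, such that conditional on f_b ≥ 1, E[Ẑ_b] = Z_b. Then E[(Ẑ₀·f₀)/(2p₀·N) + (Ẑ₁·f₁)/(2p₁·N)] = (Z₀+Z₁)/2, with terms having f_b = 0 interpreted as 0. -/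
/-! Each count f_b is a sum of N indicators of events of probability p_b, so E[f_b] = N p_b,
and independence of Ẑ_b from the samples gives E[Ẑ_b f_b] = Z_b N p_b; each term of the
estimator therefore has mean Z_b / 2. -/

open MeasureTheory ProbabilityTheory Finset

section SampleCount

variable {Ω ι α : Type*} [MeasurableSpace Ω] {μ : Measure Ω} [Fintype ι] [DecidableEq α]
  {X : ι → Ω → α} (a : α)

omit [MeasurableSpace Ω] in
lemma natCast_card_filter_eq_sum_indicator (ω : Ω) :
    (#{i | X i ω = a} : ℝ) = ∑ i, {ω | X i ω = a}.indicator 1 ω := by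
  rw [natCast_card_filter]
  exact sum_congr rfl fun i _ => by by_cases h : X i ω = a <;> simp [h]

variable [MeasurableSpace α] [MeasurableSingletonClass α]

lemma ProbabilityTheory.IndepFun.card_filter {Y : Ω → ℝ}
    (hXY : IndepFun (fun ω i => X i ω) Y μ) :
    IndepFun (fun ω => (#{i | X i ω = a} : ℝ)) Y μ := by
  have hcount : Measurable fun v : ι → α => (#{i | v i = a} : ℝ) := by
    simp_rw [natCast_card_filter]
    exact Finset.measurable_sum _ fun i _ =>
      Measurable.ite ((measurableSet_singleton a).preimage (measurable_pi_apply i))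
        measurable_const measurable_const
  exact hXY.comp hcount measurable_id

variable [IsFiniteMeasure μ] (hX : ∀ i, Measurable (X i))
include hX

lemma integrable_card_filter :
    Integrable (fun ω => (#{i | X i ω = a} : ℝ)) μ := by
  simp_rw [natCast_card_filter_eq_sum_indicator]
  exact integrable_finsetSum _ fun i _ =>
    (integrable_const 1).indicator (hX i (measurableSet_singleton a))

lemma integral_card_filter :
    ∫ ω, (#{i | X i ω = a} : ℝ) ∂μ = ∑ i, μ.real {ω | X i ω = a} := by
  simp_rw [natCast_card_filter_eq_sum_indicator]
  rw [integral_finsetSum _ fun i _ =>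
    (integrable_const 1).indicator (hX i (measurableSet_singleton a))]
  exact sum_congr rfl fun i _ => integral_indicator_one (hX i (measurableSet_singleton a))

lemma integrable_mul_card_filter {Y : Ω → ℝ} (hY : Integrable Y μ)
    (hXY : IndepFun (fun ω i => X i ω) Y μ) :
    Integrable (fun ω => Y ω * #{i | X i ω = a}) μ :=
  (hXY.card_filter a).symm.integrable_mul hY (integrable_card_filter a hX)

lemma integral_mul_card_filter {Y : Ω → ℝ} (hY : Integrable Y μ)
    (hXY : IndepFun (fun ω i => X i ω) Y μ) :
    ∫ ω, Y ω * #{i | X i ω = a} ∂μ = (∫ ω, Y ω ∂μ) * ∑ i, μ.real {ω | X i ω = a} := by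
  rw [← integral_card_filter a hX]
  exact (hXY.card_filter a).symm.integral_mul_eq_mul_integral hY.aestronglyMeasurable
    (integrable_card_filter a hX).aestronglyMeasurable

end SampleCount

theorem stmt15_general {Ω : Type*} [MeasurableSpace Ω] (μ : Measure Ω) [IsProbabilityMeasure μ]
    (N : ℕ) (hN : 0 < N)
    (bs : Fin N → Ω → Bool) (hbs : ∀ i, Measurable (bs i))
    (p₀ p₁ : ℝ) (hp₀ : 0 < p₀) (hp₁ : 0 < p₁)
    (hlaw₀ : ∀ i, μ {ω | bs i ω = false} = ENNReal.ofReal p₀)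
    (hlaw₁ : ∀ i, μ {ω | bs i ω = true} = ENNReal.ofReal p₁)
    (f₀ f₁ : Ω → ℝ)
    (hf₀ : ∀ ω, f₀ ω = ((Finset.univ.filter fun i => bs i ω = false).card : ℝ))
    (hf₁ : ∀ ω, f₁ ω = ((Finset.univ.filter fun i => bs i ω = true).card : ℝ))
    (Zhat₀ Zhat₁ : Ω → ℝ) (hi₀ : Integrable Zhat₀ μ) (hi₁ : Integrable Zhat₁ μ)
    (hind₀ : IndepFun (fun ω i => bs i ω) Zhat₀ μ)
    (hind₁ : IndepFun (fun ω i => bs i ω) Zhat₁ μ)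
    (Z₀ Z₁ : ℝ) (hm₀ : ∫ ω, Zhat₀ ω ∂μ = Z₀) (hm₁ : ∫ ω, Zhat₁ ω ∂μ = Z₁) :
    ∫ ω, (Zhat₀ ω * f₀ ω / (2 * p₀ * N) + Zhat₁ ω * f₁ ω / (2 * p₁ * N)) ∂μ
      = (Z₀ + Z₁) / 2 := by
  have hmean₀ : ∑ i, μ.real {ω | bs i ω = false} = N * p₀ := by
    simp [measureReal_def, hlaw₀, hp₀.le]
  have hmean₁ : ∑ i, μ.real {ω | bs i ω = true} = N * p₁ := by
    simp [measureReal_def, hlaw₁, hp₁.le]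
  obtain rfl : f₀ = _ := funext hf₀
  obtain rfl : f₁ = _ := funext hf₁
  rw [integral_add ((integrable_mul_card_filter false hbs hi₀ hind₀).div_const _)
      ((integrable_mul_card_filter true hbs hi₁ hind₁).div_const _),
    integral_div, integral_div, integral_mul_card_filter false hbs hi₀ hind₀,
    integral_mul_card_filter true hbs hi₁ hind₁, hmean₀, hmean₁, hm₀, hm₁]
  have hN' : (N : ℝ) ≠ 0 := by positivity
  field_simp

/-- multi-sample unbiasedness for a decision vertex. Let
b₁,…,b_N be i.i.d. Bernoulli samples with P(bᵢ = b) = p_b > 0, let f_b count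
the samples equal to b, and let Ẑ₀, Ẑ₁ be integrable random variables
independent of the sample vector with means Z₀, Z₁. Then
E[(Ẑ₀·f₀)/(2p₀·N) + (Ẑ₁·f₁)/(2p₁·N)] = (Z₀+Z₁)/2. -/
theorem stmt15 {Ω : Type*} [MeasurableSpace Ω] (μ : Measure Ω) [IsProbabilityMeasure μ]
    (N : ℕ) (hN : 0 < N)
    (bs : Fin N → Ω → Bool) (hbs : ∀ i, Measurable (bs i))
    (p₀ p₁ : ℝ) (hp₀ : 0 < p₀) (hp₁ : 0 < p₁) (hpsum : p₀ + p₁ = 1)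
    (hiid : iIndepFun bs μ)
    (hlaw₀ : ∀ i, μ {ω | bs i ω = false} = ENNReal.ofReal p₀)
    (hlaw₁ : ∀ i, μ {ω | bs i ω = true} = ENNReal.ofReal p₁)
    (f₀ f₁ : Ω → ℝ)
    (hf₀ : ∀ ω, f₀ ω = ((Finset.univ.filter fun i => bs i ω = false).card : ℝ))
    (hf₁ : ∀ ω, f₁ ω = ((Finset.univ.filter fun i => bs i ω = true).card : ℝ))
    (Zhat₀ Zhat₁ : Ω → ℝ) (hi₀ : Integrable Zhat₀ μ) (hi₁ : Integrable Zhat₁ μ)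
    (hind₀ : IndepFun (fun ω i => bs i ω) Zhat₀ μ)
    (hind₁ : IndepFun (fun ω i => bs i ω) Zhat₁ μ)
    (Z₀ Z₁ : ℝ) (hm₀ : ∫ ω, Zhat₀ ω ∂μ = Z₀) (hm₁ : ∫ ω, Zhat₁ ω ∂μ = Z₁) :
    ∫ ω, (Zhat₀ ω * f₀ ω / (2 * p₀ * N) + Zhat₁ ω * f₁ ω / (2 * p₁ * N)) ∂μ
      = (Z₀ + Z₁) / 2 :=
  stmt15_general μ N hN bs hbs p₀ p₁ hp₀ hp₁ hlaw₀ hlaw₁ f₀ f₁ hf₀ hf₁ Zhat₀ Zhat₁ hi₀ hi₁ hind₀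
    hind₁ Z₀ Z₁ hm₀ hm₁
end
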